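/- Let φ be an LTL_ALCOu^ι formula, let names(φ) be the finite set of individual names occurring in φ, and let φ' be the conjunction of φ with the formulas □⁺(⊤ ⊑ ∃u.{a}) for every a ∈ names(φ). Then φ is satisfied at instant 0 of some total finite trace if and only if φ' is satisfied at instant 0 of some partial finite trace. No rigid designator assumption is imposed. -/
import Mathlib


mutual
inductive Tm : Type where
  | ind  : ℕ → Tm          -- individual name
  | iota : Cpt → Tm        -- definite description ιC
  deriving DecidableEq

inductive Cpt : Type where
  | atom  : ℕ → Cpt        -- concept name
  | nom   : Tm → Cpt       -- nominal {τ}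
  | neg   : Cpt → Cpt
  | inter : Cpt → Cpt → Cpt
  | ex    : ℕ → Cpt → Cpt  -- ∃r.C, r a role name
  | exu   : Cpt → Cpt      -- ∃u.C, u the universal role
  | untl  : Cpt → Cpt → Cpt -- C U D
  deriving DecidableEq
end

/-- Formulas of `LTL_ALCOu^ι`. -/
inductive Fm : Type where
  | sub  : Cpt → Cpt → Fm   -- C ⊑ D
  | neg  : Fm → Fm
  | and  : Fm → Fm → Fm
  | untl : Fm → Fm → Fm     -- φ U ψ
  deriving DecidableEq

/-- Partial finite trace with set of instants `T = {0, …, len}` (constant domain). -/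
structure FTrace where
  len : ℕ
  Δ : Type
  hΔ : Nonempty Δ
  cI : ℕ → ℕ → Set Δ
  rI : ℕ → ℕ → Set (Δ × Δ)
  iI : ℕ → ℕ → Option Δ

open Classical in
/-- The value of a definite description: defined iff the set is a singleton. -/
noncomputable def iotaVal {D : Type} (s : Set D) : Option D :=
  if h : ∃ d, s = {d} then some h.choose else none

mutual
/-- Value of a term at an instant (partial, given as `Option`). -/
noncomputable def tmVal (M : FTrace) : ℕ → Tm → Option M.Δ
  | t, .ind a  => M.iI t a
  | t, .iota C => iotaVal (cExt M t C)

/-- Extension of a concept at an instant; until only looks at instants `≤ len`. -/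
noncomputable def cExt (M : FTrace) : ℕ → Cpt → Set M.Δ
  | t, .atom A    => M.cI t A
  | t, .nom τ     => {d | tmVal M t τ = some d}
  | t, .neg C     => (cExt M t C)ᶜ
  | t, .inter C D => cExt M t C ∩ cExt M t D
  | t, .ex r C    => {d | ∃ e, (d, e) ∈ M.rI t r ∧ e ∈ cExt M t C}
  | t, .exu C     => {_d : M.Δ | ∃ e, e ∈ cExt M t C}
  | t, .untl C D  =>
      {d | ∃ u, t < u ∧ u ≤ M.len ∧ d ∈ cExt M u D ∧ ∀ v, t < v → v < u → d ∈ cExt M v C}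
end

/-- Satisfaction of a formula at an instant of a finite trace. -/
def sat (M : FTrace) : ℕ → Fm → Prop
  | t, .sub C D  => cExt M t C ⊆ cExt M t D
  | t, .neg φ    => ¬ sat M t φ
  | t, .and φ ψ  => sat M t φ ∧ sat M t ψ
  | t, .untl φ ψ => ∃ u, t < u ∧ u ≤ M.len ∧ sat M u ψ ∧ ∀ v, t < v → v < u → sat M v φ

/-- Standard abbreviations. -/
def cBot : Cpt := .inter (.atom 0) (.neg (.atom 0))
def cTop : Cpt := .neg cBot
def cOr (C D : Cpt) : Cpt := .neg (.inter (.neg C) (.neg D))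
def fTop : Fm := .sub cTop cTop
def fBoxP (φ : Fm) : Fm := .and φ (.neg (.untl fTop (.neg φ)))

mutual
def tmNames : Tm → Finset ℕ
  | .ind a  => {a}
  | .iota C => cNames C

def cNames : Cpt → Finset ℕ
  | .atom _    => ∅
  | .nom τ     => tmNames τ
  | .neg C     => cNames C
  | .inter C D => cNames C ∪ cNames D
  | .ex _ C    => cNames C
  | .exu C     => cNames C
  | .untl C D  => cNames C ∪ cNames D
end

/-- Individual names occurring in a formula. -/
def fmNames : Fm → Finset ℕ
  | .sub C D  => cNames C ∪ cNames D
  | .neg φ    => fmNames φ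
  | .and φ ψ  => fmNames φ ∪ fmNames ψ
  | .untl φ ψ => fmNames φ ∪ fmNames ψ

/-- Totality: every individual name denotes at every instant of the trace. -/
def FTrace.total (M : FTrace) : Prop := ∀ t ≤ M.len, ∀ a, (M.iI t a).isSome

/-- The formula `□⁺(⊤ ⊑ ∃u.{a})`. -/
def denoteAx (a : ℕ) : Fm := fBoxP (.sub cTop (.exu (.nom (.ind a))))

/-- `φ'`: the conjunction of `φ` with `□⁺(⊤ ⊑ ∃u.{a})` for every `a ∈ names(φ)`. -/
noncomputable def rigidify (φ : Fm) : Fm := ((fmNames φ).toList.map denoteAx).foldr Fm.and φ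

/-! ### Auxiliary lemmas -/

lemma cExt_cTop (M : FTrace) (t : ℕ) : cExt M t cTop = Set.univ := by
  simp [cTop, cBot, cExt]

lemma sat_fTop (M : FTrace) (t : ℕ) : sat M t fTop := by
  simp [fTop, sat]

lemma sat_fBoxP_iff (M : FTrace) (ψ : Fm) :
    sat M 0 (fBoxP ψ) ↔ ∀ t ≤ M.len, sat M t ψ := by
  constructor
  · rintro ⟨h0, hU⟩ t ht
    rcases Nat.eq_zero_or_pos t with rfl | hpos
    · exact h0
    · by_contra hns
      exact hU ⟨t, hpos, ht, hns, fun v _ _ => sat_fTop M v⟩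
  · intro h
    refine ⟨h 0 (Nat.zero_le _), ?_⟩
    rintro ⟨u, hu0, hul, hns, _⟩
    exact hns (h u hul)

lemma sat_denoteAx_iff (M : FTrace) (a : ℕ) :
    sat M 0 (denoteAx a) ↔ ∀ t ≤ M.len, (M.iI t a).isSome := by
  rw [denoteAx, sat_fBoxP_iff]
  have key : ∀ t, sat M t (.sub cTop (.exu (.nom (.ind a)))) ↔ (M.iI t a).isSome := by
    intro t
    show cExt M t cTop ⊆ cExt M t (.exu (.nom (.ind a))) ↔ _
    rw [cExt_cTop]
    constructor
    · intro h
      have := h (Set.mem_univ M.hΔ.some)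
      simp only [cExt, tmVal, Set.mem_setOf_eq] at this
      obtain ⟨e, he⟩ := this
      simp [he]
    · intro h d _
      simp only [cExt, tmVal, Set.mem_setOf_eq]
      exact ⟨(M.iI t a).get h, by simp⟩
  exact ⟨fun h t ht => (key t).mp (h t ht), fun h t ht => (key t).mpr (h t ht)⟩

lemma sat_foldr_and (M : FTrace) (t : ℕ) (l : List Fm) (φ : Fm) :
    sat M t (l.foldr Fm.and φ) ↔ (∀ ψ ∈ l, sat M t ψ) ∧ sat M t φ := by
  induction l with
  | nil => simp
  | cons ψ l ih =>
    simp only [List.foldr_cons, List.mem_cons]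
    constructor
    · rintro ⟨h1, h2⟩
      rw [ih] at h2
      exact ⟨fun χ hχ => hχ.elim (fun e => e ▸ h1) (h2.1 χ), h2.2⟩
    · rintro ⟨h1, h2⟩
      exact ⟨h1 ψ (Or.inl rfl), ih.mpr ⟨fun χ hχ => h1 χ (Or.inr hχ), h2⟩⟩

lemma sat_rigidify_iff (M : FTrace) (φ : Fm) :
    sat M 0 (rigidify φ) ↔
      (∀ a ∈ fmNames φ, ∀ t ≤ M.len, (M.iI t a).isSome) ∧ sat M 0 φ := by
  rw [rigidify, sat_foldr_and]
  constructor
  · rintro ⟨h1, h2⟩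
    refine ⟨fun a ha => (sat_denoteAx_iff M a).mp ?_, h2⟩
    exact h1 _ (List.mem_map.mpr ⟨a, (Finset.mem_toList).mpr ha, rfl⟩)
  · rintro ⟨h1, h2⟩
    refine ⟨fun ψ hψ => ?_, h2⟩
    obtain ⟨a, ha, rfl⟩ := List.mem_map.mp hψ
    exact (sat_denoteAx_iff M a).mpr (h1 a (Finset.mem_toList.mp ha))

/-! ### Invariance under changing interpretation of irrelevant names -/

mutual
theorem tmVal_congr (M : FTrace) (iI' : ℕ → ℕ → Option M.Δ) (S : Finset ℕ)
    (h : ∀ t ≤ M.len, ∀ a ∈ S, iI' t a = M.iI t a)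
    (t : ℕ) (ht : t ≤ M.len) (τ : Tm) (hτ : tmNames τ ⊆ S) :
    tmVal ⟨M.len, M.Δ, M.hΔ, M.cI, M.rI, iI'⟩ t τ = tmVal M t τ := by
  match τ with
  | .ind a =>
      simp only [tmVal]
      exact h t ht a (hτ (by simp [tmNames]))
  | .iota C =>
      simp only [tmVal]
      rw [cExt_congr M iI' S h t ht C hτ]

theorem cExt_congr (M : FTrace) (iI' : ℕ → ℕ → Option M.Δ) (S : Finset ℕ)
    (h : ∀ t ≤ M.len, ∀ a ∈ S, iI' t a = M.iI t a)
    (t : ℕ) (ht : t ≤ M.len) (C : Cpt) (hC : cNames C ⊆ S) :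
    cExt ⟨M.len, M.Δ, M.hΔ, M.cI, M.rI, iI'⟩ t C = cExt M t C := by
  match C with
  | .atom A => rfl
  | .nom τ =>
      simp only [cExt]
      rw [tmVal_congr M iI' S h t ht τ (by simpa [cNames] using hC)]
  | .neg C =>
      simp only [cExt]
      rw [cExt_congr M iI' S h t ht C (by simpa [cNames] using hC)]
  | .inter C D =>
      simp only [cExt]
      rw [cExt_congr M iI' S h t ht C (fun x hx => hC (by simp [cNames, hx])),
          cExt_congr M iI' S h t ht D (fun x hx => hC (by simp [cNames, hx]))]
  | .ex r C =>
      simp only [cExt]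
      rw [cExt_congr M iI' S h t ht C (by simpa [cNames] using hC)]
  | .exu C =>
      simp only [cExt]
      rw [cExt_congr M iI' S h t ht C (by simpa [cNames] using hC)]
  | .untl C D =>
      simp only [cExt]
      ext d
      simp only [Set.mem_setOf_eq]
      constructor
      · rintro ⟨u, htu, hul, hD, hC'⟩
        refine ⟨u, htu, hul, ?_, fun v hv1 hv2 => ?_⟩
        · rwa [cExt_congr M iI' S h u hul D (fun x hx => hC (by simp [cNames, hx]))] at hD
        · have hvl : v ≤ M.len := le_of_lt (lt_of_lt_of_le hv2 hul)
          have := hC' v hv1 hv2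
          rwa [cExt_congr M iI' S h v hvl C (fun x hx => hC (by simp [cNames, hx]))] at this
      · rintro ⟨u, htu, hul, hD, hC'⟩
        refine ⟨u, htu, hul, ?_, fun v hv1 hv2 => ?_⟩
        · rwa [cExt_congr M iI' S h u hul D (fun x hx => hC (by simp [cNames, hx]))]
        · have hvl : v ≤ M.len := le_of_lt (lt_of_lt_of_le hv2 hul)
          rw [cExt_congr M iI' S h v hvl C (fun x hx => hC (by simp [cNames, hx]))]
          exact hC' v hv1 hv2
end

theorem sat_congr (M : FTrace) (iI' : ℕ → ℕ → Option M.Δ) (S : Finset ℕ)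
    (h : ∀ t ≤ M.len, ∀ a ∈ S, iI' t a = M.iI t a)
    (φ : Fm) (hφ : fmNames φ ⊆ S) :
    ∀ t ≤ M.len, (sat ⟨M.len, M.Δ, M.hΔ, M.cI, M.rI, iI'⟩ t φ ↔ sat M t φ) := by
  induction φ with
  | sub C D =>
      intro t ht
      simp only [sat]
      rw [cExt_congr M iI' S h t ht C (fun x hx => hφ (by simp [fmNames, hx])),
          cExt_congr M iI' S h t ht D (fun x hx => hφ (by simp [fmNames, hx]))]
  | neg ψ ih =>
      intro t ht
      exact not_congr (ih (by simpa [fmNames] using hφ) t ht)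
  | and ψ χ ih1 ih2 =>
      intro t ht
      exact and_congr (ih1 (fun x hx => hφ (by simp [fmNames, hx])) t ht)
        (ih2 (fun x hx => hφ (by simp [fmNames, hx])) t ht)
  | untl ψ χ ih1 ih2 =>
      intro t ht
      simp only [sat]
      constructor
      · rintro ⟨u, htu, hul, hχ, hψ⟩
        refine ⟨u, htu, hul,
          (ih2 (fun x hx => hφ (by simp [fmNames, hx])) u hul).mp hχ,
          fun v hv1 hv2 => ?_⟩
        exact (ih1 (fun x hx => hφ (by simp [fmNames, hx])) v
          (le_of_lt (lt_of_lt_of_le hv2 hul))).mp (hψ v hv1 hv2)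
      · rintro ⟨u, htu, hul, hχ, hψ⟩
        refine ⟨u, htu, hul,
          (ih2 (fun x hx => hφ (by simp [fmNames, hx])) u hul).mpr hχ,
          fun v hv1 hv2 => ?_⟩
        exact (ih1 (fun x hx => hφ (by simp [fmNames, hx])) v
          (le_of_lt (lt_of_lt_of_le hv2 hul))).mpr (hψ v hv1 hv2)

/-- `φ` is satisfied at instant 0 of some total finite trace iff
`φ'` is satisfied at instant 0 of some partial finite trace (no RDA). -/
theorem totalSat_iff_partialSat_rigidify_finite (φ : Fm) :
    (∃ M : FTrace, M.total ∧ sat M 0 φ) ↔ (∃ M : FTrace, sat M 0 (rigidify φ)) := by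
  constructor
  · rintro ⟨M, htot, hsat⟩
    exact ⟨M, (sat_rigidify_iff M φ).mpr ⟨fun a _ t ht => htot t ht a, hsat⟩⟩
  · rintro ⟨M, hs⟩
    rw [sat_rigidify_iff] at hs
    obtain ⟨h1, h2⟩ := hs
    set iI' : ℕ → ℕ → Option M.Δ := fun t a => some ((M.iI t a).getD M.hΔ.some) with hiI'
    have hagree : ∀ t ≤ M.len, ∀ a ∈ fmNames φ, iI' t a = M.iI t a := by
      intro t ht a ha
      have := h1 a ha t ht
      obtain ⟨x, hx⟩ := Option.isSome_iff_exists.mp this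
      simp [hiI', hx]
    refine ⟨⟨M.len, M.Δ, M.hΔ, M.cI, M.rI, iI'⟩, ?_, ?_⟩
    · intro t _ a
      simp [FTrace.total, hiI']
    · exact (sat_congr M iI' (fmNames φ) hagree φ (fun _ hx => hx) 0 (Nat.zero_le _)).mpr h2
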